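/- arXiv:1807.11251 — 7 statements merged into one kernel-verified Lean document; each statement's English description precedes it below -/
import Mathlib

section
/- Every quasi-ordered ring (R, ⪯) with -1 ≺ 0 is an ordered ring; in particular, x ⪯ y implies x + z ⪯ y + z for all z. -/
/-!
Adding an element `c ∼ 0` never changes the `∼`-class. This needs the elements `∼ 0` to be
closed under addition: to add two of them, shift first by `1`, which is not `∼ 0`, and then back
by `-1`, which is not `∼ 1` because `-1 ⪯ 0 ≺ 1`. Now if `x ⪯ y` but `y + z ⪯ x + z`, then
`y - x` and `x - y` are both `⪰ 0`, so `y - x ∼ 0` and `y + z = (x + z) + (y - x) ∼ x + z`.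
-/

variable {R : Type*} [Ring R]

/-- A quasi-ordering on a unital ring `R` (Definition 2.2 of the paper):
a reflexive, transitive, total binary relation satisfying (QR1)-(QR4).
Here `x ∼ y` means `p x y ∧ p y x` and `x ≺ y` means `p x y ∧ ¬ p y x`. -/
structure IsQuasiOrdering (p : R → R → Prop) : Prop where
  refl : ∀ x, p x x
  trans : ∀ x y z, p x y → p y z → p x z
  total : ∀ x y, p x y ∨ p y x
  qr1 : p 0 1 ∧ ¬ p 1 0
  qr2 : ∀ a b x y, p 0 a → p 0 b → p x y → p (a * x * b) (a * y * b)
  qr3 : ∀ a b x y, p 0 a → ¬ p a 0 → p 0 b → ¬ p b 0 → p (a * x * b) (a * y * b) → p x y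
  qr4 : ∀ x y z, ¬ (p z y ∧ p y z) → p x y → p (x + z) (y + z)

/-- An ordering on a unital ring `R` (Definition 2.6 of the paper):
a reflexive, transitive, total binary relation satisfying (O1)-(O4). -/
structure IsOrderingRel (p : R → R → Prop) : Prop where
  refl : ∀ x, p x x
  trans : ∀ x y z, p x y → p y z → p x z
  total : ∀ x y, p x y ∨ p y x
  o1 : p 0 1 ∧ ¬ p 1 0
  o2 : ∀ a b x y, p 0 a → p 0 b → p x y → p (a * x * b) (a * y * b)
  o3 : ∀ x y, p (x * y) 0 → p x 0 ∨ p y 0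
  o4 : ∀ x y z, p x y → p (x + z) (y + z)

namespace IsQuasiOrdering

variable {p : R → R → Prop}

theorem antisymmRel_trans (hp : IsQuasiOrdering p) {a b c : R} (hab : AntisymmRel p a b)
    (hbc : AntisymmRel p b c) : AntisymmRel p a c :=
  ⟨hp.trans _ _ _ hab.1 hbc.1, hp.trans _ _ _ hbc.2 hab.2⟩

theorem not_antisymmRel_one_zero (hp : IsQuasiOrdering p) : ¬ AntisymmRel p 1 0 :=
  fun h => hp.qr1.2 h.1

theorem not_antisymmRel_neg_one_one (hp : IsQuasiOrdering p) (h1 : p (-1) 0) :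
    ¬ AntisymmRel p (-1) 1 :=
  fun h => hp.qr1.2 (hp.trans _ _ _ h.2 h1)

theorem antisymmRel_add_right (hp : IsQuasiOrdering p) {a b z : R} (hab : AntisymmRel p a b)
    (hz : ¬ AntisymmRel p z b) : AntisymmRel p (a + z) (b + z) :=
  ⟨hp.qr4 _ _ _ hz hab.1, hp.qr4 _ _ _ (fun hza => hz (hp.antisymmRel_trans hza hab)) hab.2⟩

theorem neg_nonpos_of_nonneg (hp : IsQuasiOrdering p) (h1 : p (-1) 0) {a : R} (ha : p 0 a) :
    p (-a) 0 := by
  simpa using hp.qr2 1 a (-1) 0 hp.qr1.1 ha h1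

theorem neg_nonneg_of_nonpos (hp : IsQuasiOrdering p) {a : R} (ha : p a 0) : p 0 (-a) := by
  by_cases h : AntisymmRel p (-a) 0
  · exact h.2
  · simpa using hp.qr4 a 0 (-a) h ha

theorem add_antisymmRel_zero (hp : IsQuasiOrdering p) (h1 : p (-1) 0) {a b : R}
    (ha : AntisymmRel p a 0) (hb : AntisymmRel p b 0) : AntisymmRel p (a + b) 0 := by
  have hb1 : AntisymmRel p (b + 1) 1 := by
    simpa using hp.antisymmRel_add_right hb hp.not_antisymmRel_one_zero
  have hab1 : AntisymmRel p (a + (b + 1)) 1 := by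
    refine hp.antisymmRel_trans ?_ hb1
    simpa using hp.antisymmRel_add_right ha
      (fun h => hp.not_antisymmRel_one_zero (hp.antisymmRel_trans hb1.symm h))
  have := hp.antisymmRel_add_right hab1 (hp.not_antisymmRel_neg_one_one h1)
  rwa [add_neg_cancel, ← add_assoc, add_neg_cancel_right] at this

theorem add_antisymmRel_self (hp : IsQuasiOrdering p) (h1 : p (-1) 0) {c : R}
    (hc : AntisymmRel p c 0) (w : R) : AntisymmRel p (c + w) w := by
  by_cases hw : AntisymmRel p w 0
  · exact hp.antisymmRel_trans (hp.add_antisymmRel_zero h1 hc hw) hw.symm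
  · simpa using hp.antisymmRel_add_right hc hw

theorem antisymmRel_zero_of_antisymmRel_neg (hp : IsQuasiOrdering p) (h1 : p (-1) 0) {y : R}
    (hy : AntisymmRel p (-y) y) : AntisymmRel p y 0 := by
  rcases hp.total 0 y with h | h
  · exact ⟨hp.trans _ _ _ hy.2 (hp.neg_nonpos_of_nonneg h1 h), h⟩
  · exact ⟨h, hp.trans _ _ _ (hp.neg_nonneg_of_nonpos h) hy.1⟩

theorem sub_nonneg_of_le (hp : IsQuasiOrdering p) (h1 : p (-1) 0) {x y : R} (hxy : p x y) :
    p 0 (y - x) := by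
  -- (QR4) cannot translate by `-y` when `-y ∼ y`, but then `y ∼ 0`.
  by_cases hy : AntisymmRel p (-y) y
  · have hy0 := hp.antisymmRel_zero_of_antisymmRel_neg h1 hy
    have hx : p 0 (-x) := hp.neg_nonneg_of_nonpos (hp.trans _ _ _ hxy hy0.1)
    rw [sub_eq_add_neg]
    exact hp.trans _ _ _ hx (hp.add_antisymmRel_self h1 hy0 (-x)).2
  · have hxy' := hp.qr4 x y (-y) hy hxy
    rw [add_neg_cancel] at hxy'
    simpa [sub_eq_add_neg] using hp.neg_nonneg_of_nonpos hxy'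

theorem add_le_add_right (hp : IsQuasiOrdering p) (h1 : p (-1) 0) {x y : R} (hxy : p x y)
    (z : R) : p (x + z) (y + z) := by
  rcases hp.total (x + z) (y + z) with hle | hyx
  · exact hle
  have hnull : AntisymmRel p (y - x) 0 := by
    refine ⟨?_, hp.sub_nonneg_of_le h1 hxy⟩
    simpa using hp.neg_nonpos_of_nonneg h1 (hp.sub_nonneg_of_le h1 hyx)
  have := (hp.add_antisymmRel_self h1 hnull (x + z)).2
  rwa [← add_assoc, sub_add_cancel] at this

theorem nonpos_or_nonpos_of_mul_nonpos (hp : IsQuasiOrdering p) {x y : R} (hxy : p (x * y) 0) :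
    p x 0 ∨ p y 0 := by
  by_contra! h
  exact hp.qr1.2 <| hp.qr3 x y 1 0 ((hp.total x 0).resolve_left h.1) h.1
    ((hp.total y 0).resolve_left h.2) h.2 (by simpa using hxy)

end IsQuasiOrdering

theorem isOrderingRel_of_isQuasiOrdering_general (p : R → R → Prop) (hp : IsQuasiOrdering p)
    (h1 : p (-1) 0) :
    IsOrderingRel p ∧ ∀ x y z : R, p x y → p (x + z) (y + z) := by
  have o4 : ∀ x y z : R, p x y → p (x + z) (y + z) := fun _ _ z hxy =>
    hp.add_le_add_right h1 hxy z
  exact ⟨⟨hp.refl, hp.trans, hp.total, hp.qr1, hp.qr2,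
    fun _ _ => hp.nonpos_or_nonpos_of_mul_nonpos, o4⟩, o4⟩

/-- Proposition 2.9: every quasi-ordered ring with -1 ≺ 0 is an ordered ring;
in particular the full translation axiom (O4) holds. -/
theorem isOrderingRel_of_isQuasiOrdering (p : R → R → Prop) (hp : IsQuasiOrdering p)
    (h1 : p (-1) 0) (h2 : ¬ p 0 (-1)) :
    IsOrderingRel p ∧ ∀ x y z : R, p x y → p (x + z) (y + z) :=
  isOrderingRel_of_isQuasiOrdering_general p hp h1
end

section
/- Let (R, ⪯) be a quasi-ordered ring with 0 ≺ -1. Then 0 ⪯ x for all x ∈ R. -/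
variable {R : Type*} [Ring R]

namespace IsQuasiOrdering

variable {p : R → R → Prop}

theorem neg_le_neg (hp : IsQuasiOrdering p) (hneg : p 0 (-1)) {x y : R} (hxy : p x y) :
    p (-x) (-y) := by
  simpa using hp.qr2 (-1) 1 x y hneg hp.qr1.1 hxy

theorem nonneg_of_neg_nonpos (hp : IsQuasiOrdering p) {x : R} (hx : p (-x) 0) : p 0 x := by
  by_cases h : p 0 x
  · exact h
  · simpa using hp.qr4 (-x) 0 x (fun hx0 => h hx0.2) hx

end IsQuasiOrdering

/-- Lemma 2.12: if 0 ≺ -1, then 0 ⪯ x for all x. -/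
theorem quasiOrdering_nonneg_of_neg_one_pos (p : R → R → Prop) (hp : IsQuasiOrdering p)
    (hneg : p 0 (-1) ∧ ¬ p (-1) 0) : ∀ x : R, p 0 x := by
  intro x
  rcases hp.total 0 x with hx | hx
  · exact hx
  · exact hp.nonneg_of_neg_nonpos (by simpa using hp.neg_le_neg hneg.1 hx)
end

section
/- Let (R, ⪯) be a quasi-ordered ring with 0 ≺ -1, and let q be its support. On H := (R \ q)/∼ define [x]·[y] := [xy] and [x] ≤ [y] :⟺ y ⪯ x. Then (H, ·, ≤) is a totally ordered cancellative semigroup (multiplication and order are well-defined, [1] is neutral, the order is compatible with multiplication, and multiplication is cancellative). -/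
variable {R : Type*} [Ring R]

/-- The equivalence relation x ∼ y induced by a quasi-ordering. -/
def QSim (p : R → R → Prop) (x y : R) : Prop := p x y ∧ p y x

/-!
Because 0 ≺ -1, multiplying by -1 via (QR2) shows that 0 ⪯ -x forces 0 ⪯ x, and then (QR4)
shows that every element is nonnegative (Lemma 2.10). Once all elements are nonnegative, (QR2)
makes multiplication monotone in each factor, which gives well-definedness of the product on
classes and its compatibility with the order, while (QR3) gives cancellation by factors outside
the support; cancelling x in x·y ∼ x·0 shows that the support is prime, i.e. R \ q is closed
under multiplication.
-/

namespace IsQuasiOrdering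

variable {p : R → R → Prop}

theorem qsim_refl (hp : IsQuasiOrdering p) (x : R) : QSim p x x :=
  ⟨hp.refl x, hp.refl x⟩

theorem nonneg_of_nonneg_neg (hp : IsQuasiOrdering p) (hneg : p 0 (-1)) {x : R}
    (h : p 0 (-x)) : p 0 x := by
  simpa using hp.qr2 (-1) 1 0 (-x) hneg hp.qr1.1 h

theorem nonneg (hp : IsQuasiOrdering p) (hneg : p 0 (-1)) (x : R) : p 0 x := by
  by_contra hx
  have hnx : ¬ p 0 (-x) := fun h => hx (hp.nonneg_of_nonneg_neg hneg h)
  have h := hp.qr4 x 0 (-x) (fun h => hnx h.2) ((hp.total x 0).resolve_right hx)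
  rw [add_neg_cancel, zero_add] at h
  exact hnx h

theorem mul_le_mul (hp : IsQuasiOrdering p) (h0 : ∀ x, p 0 x) {x x' y y' : R}
    (hx : p x x') (hy : p y y') : p (x * y) (x' * y') := by
  have hy' := hp.qr2 x 1 y y' (h0 x) (h0 1) hy
  have hx' := hp.qr2 1 y' x x' (h0 1) (h0 y') hx
  rw [mul_one, mul_one] at hy'
  rw [one_mul, one_mul] at hx'
  exact hp.trans _ _ _ hy' hx'

theorem qsim_mul (hp : IsQuasiOrdering p) (h0 : ∀ x, p 0 x) {x x' y y' : R}
    (hx : QSim p x x') (hy : QSim p y y') : QSim p (x * y) (x' * y') :=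
  ⟨hp.mul_le_mul h0 hx.1 hy.1, hp.mul_le_mul h0 hx.2 hy.2⟩

theorem le_of_mul_le_mul (hp : IsQuasiOrdering p) (h0 : ∀ x, p 0 x) {a b x y : R}
    (ha : ¬ QSim p a 0) (hb : ¬ QSim p b 0)
    (h : p (a * x * b) (a * y * b)) : p x y :=
  hp.qr3 a b x y (h0 a) (fun h => ha ⟨h, h0 a⟩) (h0 b) (fun h => hb ⟨h, h0 b⟩) h

theorem qsim_of_qsim_mul_mul (hp : IsQuasiOrdering p) (h0 : ∀ x, p 0 x) {a b x y : R}
    (ha : ¬ QSim p a 0) (hb : ¬ QSim p b 0)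
    (h : QSim p (a * x * b) (a * y * b)) : QSim p x y :=
  ⟨hp.le_of_mul_le_mul h0 ha hb h.1, hp.le_of_mul_le_mul h0 ha hb h.2⟩

theorem mul_not_qsim_zero (hp : IsQuasiOrdering p) (h0 : ∀ x, p 0 x) {x y : R}
    (hx : ¬ QSim p x 0) (hy : ¬ QSim p y 0) : ¬ QSim p (x * y) 0 := by
  intro hxy
  refine hy (hp.qsim_of_qsim_mul_mul h0 hx (b := 1) (fun h => hp.qr1.2 h.1) ?_)
  simpa using hxy

end IsQuasiOrdering

/-- Lemma 2.13: for a quasi-ordered ring with 0 ≺ -1, the quotient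
H = (R \\ q)/∼ with [x]·[y] := [xy] and [x] ≤ [y] :↔ y ⪯ x is a totally
ordered cancellative semigroup with neutral element [1].  Stated on
representatives: multiplication is well-defined and closed on R \\ q,
[1] is neutral, multiplication is associative, the order is total,
compatible with multiplication, and multiplication is cancellative. -/
theorem quotient_totally_ordered_cancellative_semigroup (p : R → R → Prop)
    (hp : IsQuasiOrdering p) (hneg : p 0 (-1) ∧ ¬ p (-1) 0) :
    (∀ x x' y y' : R, QSim p x x' → QSim p y y' → QSim p (x * y) (x' * y')) ∧
    (∀ x y : R, ¬ QSim p x 0 → ¬ QSim p y 0 → ¬ QSim p (x * y) 0) ∧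
    (∀ x : R, QSim p (1 * x) x ∧ QSim p (x * 1) x) ∧
    (∀ x y z : R, QSim p (x * y * z) (x * (y * z))) ∧
    (∀ x y : R, p x y ∨ p y x) ∧
    (∀ a b x y : R, ¬ QSim p a 0 → ¬ QSim p b 0 → p y x → p (a * y * b) (a * x * b)) ∧
    (∀ a b x y : R, ¬ QSim p a 0 → ¬ QSim p b 0 → QSim p (a * x * b) (a * y * b) →
      QSim p x y) := by
  have h0 := hp.nonneg hneg.1
  refine ⟨fun _ _ _ _ => hp.qsim_mul h0, fun _ _ => hp.mul_not_qsim_zero h0,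
    fun x => ⟨by simpa using hp.qsim_refl x, by simpa using hp.qsim_refl x⟩,
    fun x y z => mul_assoc x y z ▸ hp.qsim_refl _, hp.total,
    fun a b x y _ _ h => hp.qr2 a b y x (h0 a) (h0 b) h,
    fun _ _ _ _ => hp.qsim_of_qsim_mul_mul h0⟩
end

section
/- Define on the set of quasi-orderings of a unital ring R the relation ⪯₁ ≤ ⪯₂ :⟺ (for all x,y: 0 ⪯₁ x ⪯₁ y implies x ⪯₂ y). Then ≤ is a partial order: reflexive, transitive, and antisymmetric. -/
variable {R : Type*} [Ring R]

/-- `p₁` is finer than `p₂` (Definition 3.1 of the paper):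
`0 ⪯₁ x ⪯₁ y` implies `x ⪯₂ y`. -/
def Coarser (p₁ p₂ : R → R → Prop) : Prop :=
  ∀ x y : R, p₁ 0 x → p₁ x y → p₂ x y

/-!
Reflexivity and transitivity are immediate. For antisymmetry, mutual coarseness first makes the
nonnegative cones `{z | 0 ⪯ z}` of the two quasi-orderings coincide. A comparison `x ⪯₁ y` then
transfers to `⪯₂`: directly if `0 ⪯₁ x`; through `x ⪯₂ 0 ⪯₂ y` if only `y` is nonnegative; and if
both are negative, after passing to `0 ≺ -y ⪯ -x` with (QR4).
-/

namespace IsQuasiOrdering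

variable {p : R → R → Prop}

theorem not_neg_le_zero_of_not_zero_le (hp : IsQuasiOrdering p) {x : R} (hx : ¬ p 0 x) :
    ¬ p (-x) 0 := by
  intro hnx
  have h := hp.qr4 (-x) 0 x (fun hc => hx hc.2) hnx
  rw [neg_add_cancel, zero_add] at h
  exact hx h

theorem zero_le_neg_of_not_zero_le (hp : IsQuasiOrdering p) {x : R} (hx : ¬ p 0 x) :
    p 0 (-x) :=
  (hp.total 0 (-x)).resolve_right (hp.not_neg_le_zero_of_not_zero_le hx)

theorem neg_le_neg_iff_of_not_zero_le (hp : IsQuasiOrdering p) {x y : R}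
    (hx : ¬ p 0 x) (hy : ¬ p 0 y) : p (-y) (-x) ↔ p x y := by
  have hnx := hp.not_neg_le_zero_of_not_zero_le hx
  have hy0 : p y 0 := (hp.total y 0).resolve_right hy
  constructor
  · intro hxy
    have h₁ : p (-y + y) (-x + y) :=
      hp.qr4 (-y) (-x) y (fun hc => hnx (hp.trans _ _ _ hc.2 hy0)) hxy
    rw [neg_add_cancel] at h₁
    have h₂ : p (0 + x) (-x + y + x) :=
      hp.qr4 0 (-x + y) x (fun hc => hx (hp.trans _ _ _ h₁ hc.2)) h₁
    rwa [zero_add, neg_add_cancel_comm] at h₂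
  · intro hxy
    have hny := hp.not_neg_le_zero_of_not_zero_le hy
    have h₁ : p (x + -y) (y + -y) :=
      hp.qr4 x y (-y) (fun hc => hny (hp.trans _ _ _ hc.1 hy0)) hxy
    rw [add_neg_cancel] at h₁
    have h₂ : p (x + -y + -x) (0 + -x) := hp.qr4 _ 0 (-x) (fun hc => hnx hc.1) h₁
    rwa [zero_add, add_neg_cancel_comm] at h₂

end IsQuasiOrdering

namespace Coarser

variable {p q r : R → R → Prop}

theorem refl : Coarser p p := fun _ _ _ hxy => hxy

theorem trans (hp : IsQuasiOrdering p) (hpq : Coarser p q) (hqr : Coarser q r) :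
    Coarser p r := fun x y h0x hxy =>
  hqr x y (hpq 0 x (hp.refl 0) h0x) (hpq x y h0x hxy)

theorem zero_le_iff (hp : IsQuasiOrdering p) (hq : IsQuasiOrdering q)
    (hpq : Coarser p q) (hqp : Coarser q p) (z : R) : p 0 z ↔ q 0 z :=
  ⟨hpq 0 z (hp.refl 0), hqp 0 z (hq.refl 0)⟩

theorem le_of_zero_le_iff (hp : IsQuasiOrdering p) (hq : IsQuasiOrdering q)
    (hpq : Coarser p q) (hcone : ∀ z, p 0 z ↔ q 0 z) {x y : R} (hxy : p x y) : q x y := by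
  by_cases h0x : p 0 x
  · exact hpq x y h0x hxy
  have hq0x : ¬ q 0 x := fun h => h0x ((hcone x).mpr h)
  by_cases h0y : p 0 y
  · exact hq.trans _ _ _ ((hq.total x 0).resolve_right hq0x) ((hcone y).mp h0y)
  have hq0y : ¬ q 0 y := fun h => h0y ((hcone y).mpr h)
  have hneg : p (-y) (-x) := (hp.neg_le_neg_iff_of_not_zero_le h0x h0y).mpr hxy
  exact (hq.neg_le_neg_iff_of_not_zero_le hq0x hq0y).mp
    (hpq _ _ (hp.zero_le_neg_of_not_zero_le h0y) hneg)

theorem antisymm (hp : IsQuasiOrdering p) (hq : IsQuasiOrdering q)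
    (hpq : Coarser p q) (hqp : Coarser q p) : p = q := by
  have hcone := zero_le_iff hp hq hpq hqp
  funext x y
  exact propext ⟨le_of_zero_le_iff hp hq hpq hcone,
    le_of_zero_le_iff hq hp hqp fun z => (hcone z).symm⟩

end Coarser

theorem coarser_partialOrder_general (p₁ p₂ p₃ : R → R → Prop)
    (h1 : IsQuasiOrdering p₁) (h2 : IsQuasiOrdering p₂) :
    Coarser p₁ p₁ ∧
    (Coarser p₁ p₂ → Coarser p₂ p₃ → Coarser p₁ p₃) ∧
    (Coarser p₁ p₂ → Coarser p₂ p₁ → p₁ = p₂) :=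
  ⟨Coarser.refl, Coarser.trans h1, Coarser.antisymm h1 h2⟩

/-- Proposition 3.5: the finer/coarser relation is a partial order on the set
of all quasi-orderings of R: reflexive, transitive and antisymmetric. -/
theorem coarser_partialOrder (p₁ p₂ p₃ : R → R → Prop)
    (h1 : IsQuasiOrdering p₁) (h2 : IsQuasiOrdering p₂) (h3 : IsQuasiOrdering p₃) :
    Coarser p₁ p₁ ∧
    (Coarser p₁ p₂ → Coarser p₂ p₃ → Coarser p₁ p₃) ∧
    (Coarser p₁ p₂ → Coarser p₂ p₁ → p₁ = p₂) :=
  coarser_partialOrder_general p₁ p₂ p₃ h1 h2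
end

section
/- Let q be a prime ideal of the unital ring R and ⪯_q the trivial quasi-ordering with support q (x ⪯_q y iff x ∈ q or y ∉ q). Then ⪯_q is coarser than every quasi-ordering ⪯ on R with support q, i.e., 0 ⪯ x ⪯ y implies x ⪯_q y. -/
variable {R : Type*} [Ring R]

/-- A (completely) prime two-sided ideal of `R`, given as a set. -/
structure IsCompletelyPrimeIdeal (q : Set R) : Prop where
  zero_mem : (0 : R) ∈ q
  add_mem : ∀ {x y : R}, x ∈ q → y ∈ q → x + y ∈ q
  neg_mem : ∀ {x : R}, x ∈ q → -x ∈ q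
  mul_mem_left : ∀ (r : R) {x : R}, x ∈ q → r * x ∈ q
  mul_mem_right : ∀ (r : R) {x : R}, x ∈ q → x * r ∈ q
  one_not_mem : (1 : R) ∉ q
  mem_or_mem : ∀ {x y : R}, x * y ∈ q → x ∈ q ∨ y ∈ q

theorem trivial_quasiOrdering_is_maximum_general (q : Set R)
    (p : R → R → Prop) (hp : IsQuasiOrdering p)
    (hsupp : ∀ x : R, (p x 0 ∧ p 0 x) ↔ x ∈ q) :
    Coarser p (fun x y : R => x ∈ q ∨ y ∉ q) := by
  intro x y h0x hxy
  by_cases hy : y ∈ q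
  · have hx0 : p x 0 := hp.trans x y 0 hxy ((hsupp y).mpr hy).1
    exact Or.inl ((hsupp x).mp ⟨hx0, h0x⟩)
  · exact Or.inr hy

/-- Proposition 4.5: for a prime ideal q, the trivial quasi-ordering with
support q (x ⪯_q y iff x ∈ q or y ∉ q) is coarser than every quasi-ordering
with support q. -/
theorem trivial_quasiOrdering_is_maximum (q : Set R) (hq : IsCompletelyPrimeIdeal q)
    (p : R → R → Prop) (hp : IsQuasiOrdering p)
    (hsupp : ∀ x : R, (p x 0 ∧ p 0 x) ↔ x ∈ q) :
    Coarser p (fun x y : R => x ∈ q ∨ y ∉ q) :=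
  trivial_quasiOrdering_is_maximum_general q p hp hsupp
end

section
/- Let q be a prime ideal of a unital ring R and let ⪯, ⪯₁, ⪯₂ be quasi-orderings on R with support q such that ⪯ ≤ ⪯₁ and ⪯ ≤ ⪯₂. Then ⪯₁ ≤ ⪯₂ or ⪯₂ ≤ ⪯₁. Consequently, the set of quasi-orderings on R with support q, ordered by ≤, is a tree with maximum the trivial quasi-ordering ⪯_q. -/
/-!
A quasi-ordering with prime support `q` is of one of two kinds: either `0 ⪯ -1`, and then
`x ∼ -x` for every `x`, or `∼` is congruence modulo `q`.

Two coarsenings `⪯₁, ⪯₂` of `⪯` are compared through their equivalence relations: `∼₁ ⊆ ∼₂`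
already gives `⪯₁ ≤ ⪯₂`, because every `⪯₁`-nonnegative element is `∼₁`-equivalent to a
`⪯`-nonnegative one, and on those `⪯₁` and `⪯₂` are read off from `⪯`. If `-1 ≺₁ 0`, then `∼₁` is
congruence modulo `q`, which is contained in `∼₂`. If `0 ⪯₁ -1` and `0 ⪯₂ -1`, signs can be
ignored, and failure of both inclusions gives `0 ⪯ u ⪯ v` with `u ∼₁ v`, `u ≁₂ v` and
`0 ⪯ s ⪯ t` with `s ∼₂ t`, `s ≁₁ t`. Comparing `v * s` with `u * t` in `⪯` and cancelling then
yields `v ⪯₂ u` or `t ⪯₁ s`, a contradiction.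
-/

variable {R : Type*} [Ring R]

def HasSupport (p : R → R → Prop) (q : Set R) : Prop :=
  ∀ x, AntisymmRel p x 0 ↔ x ∈ q

namespace IsQuasiOrdering

variable {p : R → R → Prop} {q : Set R} {a x y u v : R}

lemma mul_left (hp : IsQuasiOrdering p) (ha : p 0 a) (h : p x y) : p (a * x) (a * y) := by
  simpa using hp.qr2 a 1 x y ha hp.qr1.1 h

lemma mul_right (hp : IsQuasiOrdering p) (ha : p 0 a) (h : p x y) : p (x * a) (y * a) := by
  simpa using hp.qr2 1 a x y hp.qr1.1 ha h

lemma le_of_mul_le_mul_left (hp : IsQuasiOrdering p) (ha : p 0 a) (ha' : ¬ p a 0)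
    (h : p (a * x) (a * y)) : p x y :=
  hp.qr3 a 1 x y ha ha' hp.qr1.1 hp.qr1.2 (by simpa using h)

lemma le_of_mul_le_mul_right (hp : IsQuasiOrdering p) (ha : p 0 a) (ha' : ¬ p a 0)
    (h : p (x * a) (y * a)) : p x y :=
  hp.qr3 1 a x y hp.qr1.1 hp.qr1.2 ha ha' (by simpa using h)

lemma antisymmRel_refl (hp : IsQuasiOrdering p) (x : R) : AntisymmRel p x x :=
  ⟨hp.refl x, hp.refl x⟩

lemma antisymmRel_trans_s15 (hp : IsQuasiOrdering p) {z : R} (hxy : AntisymmRel p x y)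
    (hyz : AntisymmRel p y z) : AntisymmRel p x z :=
  ⟨hp.trans _ _ _ hxy.1 hyz.1, hp.trans _ _ _ hyz.2 hxy.2⟩

lemma antisymmRel_congr (hp : IsQuasiOrdering p) {x' y' : R} (hx : AntisymmRel p x x')
    (hy : AntisymmRel p y y') : AntisymmRel p x y ↔ AntisymmRel p x' y' :=
  ⟨fun h => hp.antisymmRel_trans_s15 hx.symm (hp.antisymmRel_trans_s15 h hy),
    fun h => hp.antisymmRel_trans_s15 hx (hp.antisymmRel_trans_s15 h hy.symm)⟩

lemma antisymmRel_of_mem (hp : IsQuasiOrdering p) (hs : HasSupport p q) (hx : x ∈ q)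
    (hy : y ∈ q) : AntisymmRel p x y :=
  hp.antisymmRel_trans_s15 ((hs x).2 hx) ((hs y).2 hy).symm

lemma mem_of_antisymmRel (hp : IsQuasiOrdering p) (hs : HasSupport p q) (hx : x ∈ q)
    (h : AntisymmRel p x y) : y ∈ q :=
  (hs y).1 (hp.antisymmRel_trans_s15 h.symm ((hs x).2 hx))

lemma coarser_trivial (hp : IsQuasiOrdering p) (hs : HasSupport p q) :
    Coarser p (fun x y : R => x ∈ q ∨ y ∉ q) := by
  intro x y h0x hxy
  refine or_iff_not_imp_right.2 fun hy => (hs x).1 ⟨?_, h0x⟩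
  exact hp.trans x y 0 hxy ((hs y).2 (not_not.1 hy)).1

lemma nonneg_neg (hp : IsQuasiOrdering p) (hq : IsCompletelyPrimeIdeal q) (hs : HasSupport p q)
    (hx : p x 0) : p 0 (-x) := by
  by_cases hxq : x ∈ q
  · exact ((hs (-x)).2 (hq.neg_mem hxq)).2
  · have hnx : ¬ AntisymmRel p (-x) 0 := fun h => hxq (by simpa using hq.neg_mem ((hs _).1 h))
    simpa using hp.qr4 x 0 (-x) hnx hx

lemma nonneg_or_nonneg_neg (hp : IsQuasiOrdering p) (hq : IsCompletelyPrimeIdeal q)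
    (hs : HasSupport p q) (x : R) : p 0 x ∨ p 0 (-x) :=
  (hp.total 0 x).imp_right (hp.nonneg_neg hq hs)

lemma antisymmRel_of_sub_mem (hp : IsQuasiOrdering p) (hq : IsCompletelyPrimeIdeal q)
    (hs : HasSupport p q) (h : y - x ∈ q) : AntisymmRel p x y := by
  by_cases hx : x ∈ q
  · exact hp.antisymmRel_of_mem hs hx (by simpa using hq.add_mem h hx)
  · have hyx := (hs (y - x)).2 h
    have hnx : ¬ AntisymmRel p x (y - x) := fun h' => hx ((hs x).1 (hp.antisymmRel_trans_s15 h' hyx))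
    have hnx' : ¬ AntisymmRel p x 0 := fun h' => hx ((hs x).1 h')
    constructor
    · simpa using hp.qr4 0 (y - x) x hnx hyx.2
    · simpa using hp.qr4 (y - x) 0 x hnx' hyx.1

lemma antisymmRel_neg (hp : IsQuasiOrdering p) (hq : IsCompletelyPrimeIdeal q)
    (hs : HasSupport p q) (hx : x ∉ q) (h : p 0 x) (h' : p 0 (-x)) : AntisymmRel p x (-x) := by
  by_contra hc
  have : p (-x) 0 := by simpa using hp.qr4 0 x (-x) (fun h'' => hc h''.symm) h
  exact hx (by simpa using hq.neg_mem ((hs (-x)).1 ⟨this, h'⟩))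

lemma nonneg_neg_one_of_antisymmRel_neg (hp : IsQuasiOrdering p) (hq : IsCompletelyPrimeIdeal q)
    (hs : HasSupport p q) (hx : x ∉ q) (h : AntisymmRel p x (-x)) : p 0 (-1) := by
  refine hp.trans 0 1 (-1) hp.qr1.1 ?_
  rcases hp.total 0 x with hx0 | hx0
  · exact hp.le_of_mul_le_mul_left hx0 (fun h' => hx ((hs x).1 ⟨h', hx0⟩)) (by simpa using h.1)
  · have hnx : p 0 (-x) := hp.nonneg_neg hq hs hx0
    refine hp.le_of_mul_le_mul_left hnx (fun h' => hx ?_) (by simpa using h.2)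
    simpa using hq.neg_mem ((hs (-x)).1 ⟨h', hnx⟩)

lemma nonneg_of_nonneg_neg_one (hp : IsQuasiOrdering p) (hq : IsCompletelyPrimeIdeal q)
    (hs : HasSupport p q) (h : p 0 (-1)) (x : R) : p 0 x := by
  refine (hp.total 0 x).elim id fun hx => ?_
  simpa using hp.mul_left (hp.nonneg_neg hq hs hx) h

lemma antisymmRel_neg_of_nonneg_neg_one (hp : IsQuasiOrdering p) (hq : IsCompletelyPrimeIdeal q)
    (hs : HasSupport p q) (h : p 0 (-1)) (x : R) : AntisymmRel p x (-x) := by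
  have h1 := hp.antisymmRel_neg hq hs hq.one_not_mem hp.qr1.1 h
  have hx := hp.nonneg_of_nonneg_neg_one hq hs h x
  exact ⟨by simpa using hp.mul_left hx h1.1, by simpa using hp.mul_left hx h1.2⟩

lemma sub_mem_of_antisymmRel (hp : IsQuasiOrdering p) (hq : IsCompletelyPrimeIdeal q)
    (hs : HasSupport p q) (h : ¬ p 0 (-1)) (huv : AntisymmRel p u v) : v - u ∈ q := by
  by_cases hu : u ∈ q
  · simpa [sub_eq_add_neg] using hq.add_mem (hp.mem_of_antisymmRel hs hu huv) (hq.neg_mem hu)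
  · have hnu : ∀ w, AntisymmRel p u w → ¬ AntisymmRel p (-u) w := fun w huw hw =>
      h (hp.nonneg_neg_one_of_antisymmRel_neg hq hs hu (hp.antisymmRel_trans_s15 huw hw.symm))
    refine (hs (v - u)).1 ⟨?_, ?_⟩
    · simpa [sub_eq_add_neg] using hp.qr4 v u (-u) (hnu u (hp.antisymmRel_refl u)) huv.2
    · simpa [sub_eq_add_neg] using hp.qr4 u v (-u) (hnu v huv) huv.1

end IsQuasiOrdering

section Coarsening

variable {p p₁ p₂ : R → R → Prop} {q : Set R}

lemma Coarser.nonneg (h : Coarser p p₁) (hp : IsQuasiOrdering p) {x : R} (hx : p 0 x) : p₁ 0 x :=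
  h 0 x (hp.refl 0) hx

lemma Coarser.exists_nonneg_antisymmRel (h : Coarser p p₁) (hp : IsQuasiOrdering p)
    (hp₁ : IsQuasiOrdering p₁) (hq : IsCompletelyPrimeIdeal q) (hs : HasSupport p q)
    (hs₁ : HasSupport p₁ q) {x : R} (hx : p₁ 0 x) : ∃ x', p 0 x' ∧ AntisymmRel p₁ x x' := by
  by_cases h0x : p 0 x
  · exact ⟨x, h0x, hp₁.antisymmRel_refl x⟩
  · have h0nx := hp.nonneg_neg hq hs ((hp.total x 0).resolve_right h0x)
    refine ⟨-x, h0nx, hp₁.antisymmRel_neg hq hs₁ (fun hxq => h0x ((hs x).2 hxq).2) hx ?_⟩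
    exact h.nonneg hp h0nx

theorem coarser_of_antisymmRel_imp (hp : IsQuasiOrdering p) (hp₁ : IsQuasiOrdering p₁)
    (hp₂ : IsQuasiOrdering p₂) (hq : IsCompletelyPrimeIdeal q) (hs : HasSupport p q)
    (hs₁ : HasSupport p₁ q) (h₁ : Coarser p p₁) (h₂ : Coarser p p₂)
    (h : ∀ x y, AntisymmRel p₁ x y → AntisymmRel p₂ x y) : Coarser p₁ p₂ := by
  have of_nonneg : ∀ x y, p 0 x → p 0 y → p₁ x y → p₂ x y := fun x y hx hy hxy =>
    (hp.total x y).elim (h₂ x y hx) fun hyx => (h x y ⟨hxy, h₁ y x hy hyx⟩).1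
  intro x y hx hxy
  obtain ⟨x', hx', hxx'⟩ := h₁.exists_nonneg_antisymmRel hp hp₁ hq hs hs₁ hx
  obtain ⟨y', hy', hyy'⟩ := h₁.exists_nonneg_antisymmRel hp hp₁ hq hs hs₁ (hp₁.trans _ _ _ hx hxy)
  have hxy' := of_nonneg x' y' hx' hy' (hp₁.trans _ _ _ hxx'.2 (hp₁.trans _ _ _ hxy hyy'.1))
  exact hp₂.trans _ _ _ (h _ _ hxx').1 (hp₂.trans _ _ _ hxy' (h _ _ hyy').2)

theorem coarser_of_not_nonneg_neg_one (hp : IsQuasiOrdering p) (hp₁ : IsQuasiOrdering p₁)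
    (hp₂ : IsQuasiOrdering p₂) (hq : IsCompletelyPrimeIdeal q) (hs : HasSupport p q)
    (hs₁ : HasSupport p₁ q) (hs₂ : HasSupport p₂ q) (h₁ : Coarser p p₁) (h₂ : Coarser p p₂)
    (hn₁ : ¬ p₁ 0 (-1)) : Coarser p₁ p₂ :=
  coarser_of_antisymmRel_imp hp hp₁ hp₂ hq hs hs₁ h₁ h₂ fun _ _ h =>
    hp₂.antisymmRel_of_sub_mem hq hs₂ (hp₁.sub_mem_of_antisymmRel hq hs₁ hn₁ h)

theorem false_of_crossed_antisymmRel (hp : IsQuasiOrdering p) (hp₁ : IsQuasiOrdering p₁)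
    (hp₂ : IsQuasiOrdering p₂) (hs₁ : HasSupport p₁ q) (hs₂ : HasSupport p₂ q)
    (h₁ : Coarser p p₁) (h₂ : Coarser p p₂) {u v s t : R}
    (h0u : p 0 u) (h0v : p 0 v) (huv₁ : AntisymmRel p₁ u v) (huv₂ : ¬ AntisymmRel p₂ u v)
    (h0s : p 0 s) (h0t : p 0 t) (hst₂ : AntisymmRel p₂ s t) (hst₁ : ¬ AntisymmRel p₁ s t) :
    False := by
  wlog huv : p u v generalizing u v
  · exact this h0v h0u huv₁.symm (fun h => huv₂ h.symm) ((hp.total u v).resolve_left huv)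
  wlog hst : p s t generalizing s t
  · exact this h0t h0s hst₂.symm (fun h => hst₁ h.symm) ((hp.total s t).resolve_left hst)
  have hu : u ∉ q := fun h =>
    huv₂ (hp₂.antisymmRel_of_mem hs₂ h (hp₁.mem_of_antisymmRel hs₁ h huv₁))
  have hs : s ∉ q := fun h =>
    hst₁ (hp₁.antisymmRel_of_mem hs₁ h (hp₂.mem_of_antisymmRel hs₂ h hst₂))
  have hu_pos : ¬ p₁ u 0 := fun h => hu ((hs₁ u).1 ⟨h, h₁.nonneg hp h0u⟩)
  have hs_pos : ¬ p₂ s 0 := fun h => hs ((hs₂ s).1 ⟨h, h₂.nonneg hp h0s⟩)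
  rcases hp.total (v * s) (u * t) with h | h
  · have : p₂ (v * s) (u * s) := hp₂.trans _ _ _ (h₂ _ _ (by simpa using hp.mul_right h0s h0v) h)
      (hp₂.mul_left (h₂.nonneg hp h0u) hst₂.2)
    exact huv₂ ⟨h₂ u v h0u huv, hp₂.le_of_mul_le_mul_right (h₂.nonneg hp h0s) hs_pos this⟩
  · have : p₁ (u * t) (u * s) := hp₁.trans _ _ _ (h₁ _ _ (by simpa using hp.mul_right h0t h0u) h)
      (hp₁.mul_right (h₁.nonneg hp h0s) huv₁.2)
    exact hst₁ ⟨h₁ s t h0s hst, hp₁.le_of_mul_le_mul_left (h₁.nonneg hp h0u) hu_pos this⟩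

theorem antisymmRel_imp_or_of_nonneg_neg_one (hp : IsQuasiOrdering p) (hp₁ : IsQuasiOrdering p₁)
    (hp₂ : IsQuasiOrdering p₂) (hq : IsCompletelyPrimeIdeal q) (hs : HasSupport p q)
    (hs₁ : HasSupport p₁ q) (hs₂ : HasSupport p₂ q) (h₁ : Coarser p p₁) (h₂ : Coarser p p₂)
    (hn₁ : p₁ 0 (-1)) (hn₂ : p₂ 0 (-1)) :
    (∀ x y, AntisymmRel p₁ x y → AntisymmRel p₂ x y) ∨
      (∀ x y, AntisymmRel p₂ x y → AntisymmRel p₁ x y) := by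
  have rep : ∀ x, ∃ x', p 0 x' ∧ AntisymmRel p₁ x x' ∧ AntisymmRel p₂ x x' := fun x =>
    (hp.nonneg_or_nonneg_neg hq hs x).elim
      (fun hx => ⟨x, hx, hp₁.antisymmRel_refl x, hp₂.antisymmRel_refl x⟩)
      (fun hx => ⟨-x, hx, hp₁.antisymmRel_neg_of_nonneg_neg_one hq hs₁ hn₁ x,
        hp₂.antisymmRel_neg_of_nonneg_neg_one hq hs₂ hn₂ x⟩)
  by_contra! ⟨⟨u, v, huv₁, huv₂⟩, ⟨s, t, hst₂, hst₁⟩⟩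
  obtain ⟨u', h0u, huu₁, huu₂⟩ := rep u
  obtain ⟨v', h0v, hvv₁, hvv₂⟩ := rep v
  obtain ⟨s', h0s, hss₁, hss₂⟩ := rep s
  obtain ⟨t', h0t, htt₁, htt₂⟩ := rep t
  exact false_of_crossed_antisymmRel hp hp₁ hp₂ hs₁ hs₂ h₁ h₂ h0u h0v
    ((hp₁.antisymmRel_congr huu₁ hvv₁).1 huv₁) (mt (hp₂.antisymmRel_congr huu₂ hvv₂).2 huv₂)
    h0s h0t ((hp₂.antisymmRel_congr hss₂ htt₂).1 hst₂) (mt (hp₁.antisymmRel_congr hss₁ htt₁).2 hst₁)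

end Coarsening

/-- Proposition 4.8 and Theorem 4.9: if ⪯ ≤ ⪯₁, ⪯₂ all with support the prime
ideal q, then ⪯₁ ≤ ⪯₂ or ⪯₂ ≤ ⪯₁; moreover every quasi-ordering with support q
is finer than the trivial quasi-ordering ⪯_q, so the quasi-orderings with
support q form a tree with maximum ⪯_q. -/
theorem quasiOrderings_with_support_form_tree (q : Set R) (hq : IsCompletelyPrimeIdeal q)
    (p p₁ p₂ : R → R → Prop)
    (hp : IsQuasiOrdering p) (hp₁ : IsQuasiOrdering p₁) (hp₂ : IsQuasiOrdering p₂)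
    (hsupp : ∀ x : R, (p x 0 ∧ p 0 x) ↔ x ∈ q)
    (hsupp₁ : ∀ x : R, (p₁ x 0 ∧ p₁ 0 x) ↔ x ∈ q)
    (hsupp₂ : ∀ x : R, (p₂ x 0 ∧ p₂ 0 x) ↔ x ∈ q)
    (h1 : Coarser p p₁) (h2 : Coarser p p₂) :
    (Coarser p₁ p₂ ∨ Coarser p₂ p₁) ∧
      Coarser p₁ (fun x y : R => x ∈ q ∨ y ∉ q) := by
  refine ⟨?_, hp₁.coarser_trivial hsupp₁⟩
  by_cases hn₁ : p₁ 0 (-1)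
  · by_cases hn₂ : p₂ 0 (-1)
    · exact (antisymmRel_imp_or_of_nonneg_neg_one hp hp₁ hp₂ hq hsupp hsupp₁ hsupp₂ h1 h2
        hn₁ hn₂).imp (coarser_of_antisymmRel_imp hp hp₁ hp₂ hq hsupp hsupp₁ h1 h2)
        (coarser_of_antisymmRel_imp hp hp₂ hp₁ hq hsupp hsupp₂ h2 h1)
    · exact Or.inr (coarser_of_not_nonneg_neg_one hp hp₂ hp₁ hq hsupp hsupp₂ hsupp₁ h2 h1 hn₂)
  · exact Or.inl (coarser_of_not_nonneg_neg_one hp hp₁ hp₂ hq hsupp hsupp₁ hsupp₂ h1 h2 hn₁)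
end

section
/- Let R be a unital ring. The set of all quasi-orderings on R, with the relation ≤, is a tree if and only if R has precisely one prime ideal. (In particular, if R has two distinct prime ideals arising as supports of quasi-orderings, then ≤ has no maximum.) -/
variable {R : Type*} [Ring R]

/-!
The support `{a | a ∼ 0}` of a quasi-ordering is a completely prime ideal `q`, and `⪯` is finer
than the trivial quasi-ordering `⪯_q` exactly when its support is `q`. Hence a maximum exists
iff all quasi-orderings share one support, i.e. iff there is a unique prime ideal.

For the tree property, let `⪯₁`, `⪯₂` be coarsenings of `⪯` with the same support. An ordering
(`-1 ≺ 0`) satisfies `x ⪯ y ↔ 0 ⪯ y - x`, and a coarsening of ordering type cannot enlarge the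
cone of nonnegative elements: an extra element `z` would have `-z` in both cones and so lie in
the common support. Hence that coarsening refines back to `⪯`.
If both coarsenings are of valuation type (`0 ⪯ -1`), signs do not matter, and from
`x ⪯₁ y`, `y ≺₂ x`, `u ⪯₂ v`, `v ≺₁ u` with `x, y, u, v` nonnegative, comparing `y u` with
`x v` in `⪯` and cancelling gives `u ⪯₁ v` or `x ⪯₂ y`.
-/

namespace IsCompletelyPrimeIdeal

variable {q : Set R}

theorem mul_mem_iff (hq : IsCompletelyPrimeIdeal q) {x y : R} : x * y ∈ q ↔ x ∈ q ∨ y ∈ q :=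
  ⟨hq.mem_or_mem, fun h => h.elim (hq.mul_mem_right y) (hq.mul_mem_left x)⟩

theorem add_mem_iff_left (hq : IsCompletelyPrimeIdeal q) {x y : R} (hy : y ∈ q) :
    x + y ∈ q ↔ x ∈ q :=
  ⟨fun h => by simpa using hq.add_mem h (hq.neg_mem hy), fun h => hq.add_mem h hy⟩

theorem add_mem_iff_right (hq : IsCompletelyPrimeIdeal q) {x y : R} (hx : x ∈ q) :
    x + y ∈ q ↔ y ∈ q :=
  ⟨fun h => by simpa using hq.add_mem (hq.neg_mem hx) h, hq.add_mem hx⟩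

end IsCompletelyPrimeIdeal

namespace QuasiOrdering

def supp (p : R → R → Prop) : Set R := {a | p a 0 ∧ p 0 a}

/-- The trivial quasi-ordering `⪯_q`. -/
def trivialOf (q : Set R) : R → R → Prop := fun x y => x ∈ q ∨ y ∉ q

open Classical in
noncomputable def absOf (p : R → R → Prop) (x : R) : R := if p 0 x then x else -x

theorem absOf_eq_or (p : R → R → Prop) (x : R) : absOf p x = x ∨ absOf p x = -x := by
  unfold absOf
  split_ifs
  exacts [Or.inl rfl, Or.inr rfl]

end QuasiOrdering

open QuasiOrdering

theorem IsCompletelyPrimeIdeal.isQuasiOrdering_trivialOf {q : Set R}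
    (hq : IsCompletelyPrimeIdeal q) : IsQuasiOrdering (trivialOf q) where
  refl x := em (x ∈ q)
  trans _ _ _ := by unfold trivialOf; tauto
  total _ _ := by unfold trivialOf; tauto
  qr1 := by simp [trivialOf, hq.zero_mem, hq.one_not_mem]
  qr2 _ _ _ _ _ _ := by simp only [trivialOf, hq.mul_mem_iff]; tauto
  qr3 _ _ _ _ _ _ _ _ := by simp only [trivialOf, hq.mul_mem_iff]; tauto
  qr4 _ y z hyz _ := by
    refine Or.inr fun h => hyz ?_
    by_cases hz : z ∈ q
    · exact ⟨Or.inl hz, Or.inl ((hq.add_mem_iff_left hz).1 h)⟩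
    · by_cases hy : y ∈ q
      · exact absurd ((hq.add_mem_iff_right hy).1 h) hz
      · exact ⟨Or.inr hy, Or.inr hz⟩

namespace IsQuasiOrdering

variable {p p₁ p₂ : R → R → Prop} {a b d r x y u v : R}

theorem mul_left_mono (hp : IsQuasiOrdering p) (hr : p 0 r) (h : p x y) : p (r * x) (r * y) := by
  simpa using hp.qr2 r 1 x y hr hp.qr1.1 h

theorem mul_right_mono (hp : IsQuasiOrdering p) (hr : p 0 r) (h : p x y) :
    p (x * r) (y * r) := by
  simpa using hp.qr2 1 r x y hp.qr1.1 hr h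

theorem rel_of_mul_left (hp : IsQuasiOrdering p) (hr : p 0 r) (hr' : ¬ p r 0)
    (h : p (r * x) (r * y)) : p x y :=
  hp.qr3 r 1 x y hr hr' hp.qr1.1 hp.qr1.2 (by simpa using h)

theorem rel_of_mul_right (hp : IsQuasiOrdering p) (hr : p 0 r) (hr' : ¬ p r 0)
    (h : p (x * r) (y * r)) : p x y :=
  hp.qr3 1 r x y hp.qr1.1 hp.qr1.2 hr hr' (by simpa using h)

theorem nonneg_mul (hp : IsQuasiOrdering p) (ha : p 0 a) (hb : p 0 b) : p 0 (a * b) := by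
  simpa using hp.mul_left_mono ha hb

theorem neg_pos_of_not_nonneg (hp : IsQuasiOrdering p) (h : ¬ p 0 a) :
    p 0 (-a) ∧ ¬ p (-a) 0 := by
  have hna : -a ∉ supp p := fun hn =>
    h (by simpa using hp.qr4 (-a) 0 a (fun h' => h h'.2) hn.1)
  have hpos : p 0 (-a) := by
    simpa using hp.qr4 a 0 (-a) hna ((hp.total a 0).resolve_right h)
  exact ⟨hpos, fun h' => hna ⟨h', hpos⟩⟩

theorem nonneg_absOf (hp : IsQuasiOrdering p) (x : R) : p 0 (absOf p x) := by
  unfold absOf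
  split_ifs with h
  exacts [h, (hp.neg_pos_of_not_nonneg h).1]

theorem neg_mem_supp (hp : IsQuasiOrdering p) (ha : a ∈ supp p) : -a ∈ supp p := by
  refine ⟨?_, ?_⟩
  · by_cases h : p (-a) a ∧ p a (-a)
    · exact hp.trans _ _ _ h.1 ha.1
    · simpa using hp.qr4 0 a (-a) h ha.2
  · by_contra h
    exact (hp.neg_pos_of_not_nonneg h).2 (by simpa using ha.1)

theorem neg_mem_supp_iff (hp : IsQuasiOrdering p) : -a ∈ supp p ↔ a ∈ supp p :=
  ⟨fun h => by simpa using hp.neg_mem_supp h, hp.neg_mem_supp⟩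

theorem absOf_mem_supp_iff (hp : IsQuasiOrdering p) : absOf p x ∈ supp p ↔ x ∈ supp p := by
  rcases absOf_eq_or p x with e | e <;> rw [e]
  exact hp.neg_mem_supp_iff

theorem not_absOf_nonpos (hp : IsQuasiOrdering p) (hx : x ∉ supp p) : ¬ p (absOf p x) 0 :=
  fun h => hx (hp.absOf_mem_supp_iff.1 ⟨h, hp.nonneg_absOf x⟩)

theorem add_equiv_of_mem_supp (hp : IsQuasiOrdering p) (hd : d ∈ supp p) (hb : b ∉ supp p) :
    p (d + b) b ∧ p b (d + b) := by
  have hbd : ¬ (p b d ∧ p d b) := fun h =>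
    hb ⟨hp.trans _ _ _ h.1 hd.1, hp.trans _ _ _ hd.2 h.2⟩
  exact ⟨by simpa using hp.qr4 d 0 b hb hd.1, by simpa using hp.qr4 0 d b hbd hd.2⟩

theorem add_mem_supp (hp : IsQuasiOrdering p) (ha : a ∈ supp p) (hb : b ∈ supp p) :
    a + b ∈ supp p := by
  by_contra h
  have hba := hp.add_equiv_of_mem_supp (hp.neg_mem_supp ha) h
  rw [neg_add_cancel_left] at hba
  exact h ⟨hp.trans _ _ _ hba.2 hb.1, hp.trans _ _ _ hb.2 hba.1⟩

theorem equiv_of_sub_mem_supp (hp : IsQuasiOrdering p) (h : a - b ∈ supp p) :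
    p a b ∧ p b a := by
  by_cases hb : b ∈ supp p
  · have ha : a ∈ supp p := by simpa using hp.add_mem_supp h hb
    exact ⟨hp.trans _ _ _ ha.1 hb.2, hp.trans _ _ _ hb.1 ha.2⟩
  · simpa using hp.add_equiv_of_mem_supp h hb

theorem mul_mem_supp_left (hp : IsQuasiOrdering p) (r : R) (ha : a ∈ supp p) :
    r * a ∈ supp p := by
  have h : absOf p r * a ∈ supp p :=
    ⟨by simpa using hp.mul_left_mono (hp.nonneg_absOf r) ha.1,
      by simpa using hp.mul_left_mono (hp.nonneg_absOf r) ha.2⟩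
  rcases absOf_eq_or p r with e | e <;> rw [e] at h
  · exact h
  · rwa [neg_mul, hp.neg_mem_supp_iff] at h

theorem mul_mem_supp_right (hp : IsQuasiOrdering p) (r : R) (ha : a ∈ supp p) :
    a * r ∈ supp p := by
  have h : a * absOf p r ∈ supp p :=
    ⟨by simpa using hp.mul_right_mono (hp.nonneg_absOf r) ha.1,
      by simpa using hp.mul_right_mono (hp.nonneg_absOf r) ha.2⟩
  rcases absOf_eq_or p r with e | e <;> rw [e] at h
  · exact h
  · rwa [mul_neg, hp.neg_mem_supp_iff] at h

theorem mem_supp_or_mem_supp_of_mul (hp : IsQuasiOrdering p) (h : a * b ∈ supp p) :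
    a ∈ supp p ∨ b ∈ supp p := by
  by_contra! hab
  have habs : absOf p a * absOf p b ∈ supp p := by
    rcases absOf_eq_or p a with ea | ea <;> rcases absOf_eq_or p b with eb | eb <;>
      simpa [ea, eb, hp.neg_mem_supp_iff] using h
  have hb : p (absOf p b) 0 :=
    hp.rel_of_mul_left (hp.nonneg_absOf a) (hp.not_absOf_nonpos hab.1) (by simpa using habs.1)
  exact hp.not_absOf_nonpos hab.2 hb

theorem supp_isCompletelyPrimeIdeal (hp : IsQuasiOrdering p) :
    IsCompletelyPrimeIdeal (supp p) where
  zero_mem := ⟨hp.refl 0, hp.refl 0⟩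
  add_mem := hp.add_mem_supp
  neg_mem := hp.neg_mem_supp
  mul_mem_left r _ := hp.mul_mem_supp_left r
  mul_mem_right r _ := hp.mul_mem_supp_right r
  one_not_mem h := hp.qr1.2 h.1
  mem_or_mem := hp.mem_supp_or_mem_supp_of_mul

theorem coarser_trivialOf_supp (hp : IsQuasiOrdering p) : Coarser p (trivialOf (supp p)) := by
  intro x y hx hxy
  by_cases hxs : x ∈ supp p
  · exact Or.inl hxs
  · exact Or.inr fun hy => hxs ⟨hp.trans _ _ _ hxy hy.1, hx⟩

theorem supp_eq_of_coarser_trivialOf {q : Set R} (hp : IsQuasiOrdering p)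
    (hq : IsCompletelyPrimeIdeal q) (hc : Coarser (trivialOf q) p) : supp p = q := by
  ext z
  refine ⟨fun hz => ?_, fun hz => ⟨hc z 0 (Or.inl hq.zero_mem) (Or.inl hz),
    hc 0 z (Or.inl hq.zero_mem) (Or.inl hq.zero_mem)⟩⟩
  by_contra hzq
  exact hp.qr1.2 (hp.trans _ _ _ (hc 1 z (Or.inl hq.zero_mem) (Or.inr hzq)) hz.1)

theorem mem_supp_of_nonneg_of_nonneg_neg (hp : IsQuasiOrdering p) (ho : ¬ p 0 (-1))
    (h : p 0 b) (h' : p 0 (-b)) : b ∈ supp p := by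
  have hbb : b * b ∈ supp p := by
    refine ⟨?_, hp.nonneg_mul h h⟩
    have : p 0 (-(b * b)) := by simpa using hp.nonneg_mul h h'
    simpa using hp.mul_left_mono this ((hp.total _ _).resolve_right ho)
  simpa using hp.mem_supp_or_mem_supp_of_mul hbb

theorem mem_supp_of_equiv_neg (hp : IsQuasiOrdering p) (ho : ¬ p 0 (-1)) (h : p b (-b))
    (h' : p (-b) b) : b ∈ supp p := by
  by_cases hb : p 0 b
  · exact hp.mem_supp_of_nonneg_of_nonneg_neg ho hb (hp.trans _ _ _ hb h)
  · exact absurd (hp.trans _ _ _ (hp.neg_pos_of_not_nonneg hb).1 h') hb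

theorem nonneg_sub_of_rel (hp : IsQuasiOrdering p) (ho : ¬ p 0 (-1)) (h : p x y) :
    p 0 (y - x) := by
  by_cases hy : p (-y) y ∧ p y (-y)
  · have hys := hp.mem_supp_of_equiv_neg ho hy.2 hy.1
    have hx : p 0 (-x) := by
      by_contra hx
      exact (hp.neg_pos_of_not_nonneg hx).2 (by simpa using hp.trans _ _ _ h hys.1)
    exact hp.trans _ _ _ hx (hp.equiv_of_sub_mem_supp (by simpa using hys)).2
  · have h' : p (x - y) 0 := by simpa [sub_eq_add_neg] using hp.qr4 x y (-y) hy h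
    by_contra hyx
    have hxy : p 0 (x - y) := by simpa using (hp.neg_pos_of_not_nonneg hyx).1
    exact hyx (by simpa using (hp.neg_mem_supp ⟨h', hxy⟩).2)

theorem rel_iff_nonneg_sub (hp : IsQuasiOrdering p) (ho : ¬ p 0 (-1)) :
    p x y ↔ p 0 (y - x) := by
  refine ⟨hp.nonneg_sub_of_rel ho, fun h => ?_⟩
  by_contra hxy
  have hyx := hp.nonneg_sub_of_rel ho ((hp.total x y).resolve_left hxy)
  exact hxy (hp.equiv_of_sub_mem_supp
    (hp.mem_supp_of_nonneg_of_nonneg_neg ho hyx (by simpa using h))).1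

theorem rel_of_coarser_of_not_nonneg_neg_one (hp : IsQuasiOrdering p)
    (hp₁ : IsQuasiOrdering p₁) (hc : Coarser p p₁) (ho₁ : ¬ p₁ 0 (-1))
    (hs : supp p₁ = supp p) (h : p₁ x y) : p x y := by
  have ho : ¬ p 0 (-1) := fun h => ho₁ (hc 0 (-1) (hp.refl 0) h)
  have hpos : ∀ z, p₁ 0 z → p 0 z := fun z hz => by
    by_contra hz'
    have := hc 0 (-z) (hp.refl 0) (hp.neg_pos_of_not_nonneg hz').1
    exact hz' (hs ▸ hp₁.mem_supp_of_nonneg_of_nonneg_neg ho₁ hz this).2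
  exact (hp.rel_iff_nonneg_sub ho).2 (hpos _ ((hp₁.rel_iff_nonneg_sub ho₁).1 h))

theorem equiv_neg_of_nonneg_neg_one (hp : IsQuasiOrdering p) (hv : p 0 (-1)) (z : R) :
    p z (-z) ∧ p (-z) z := by
  have neg : ∀ {a b}, p a b → p (-a) (-b) := fun h => by simpa using hp.mul_left_mono hv h
  rcases hp.total z (-z) with h | h
  · exact ⟨h, by simpa using neg h⟩
  · exact ⟨by simpa using neg h, h⟩

theorem rel_neg_left_iff (hp : IsQuasiOrdering p) (hv : p 0 (-1)) : p (-x) y ↔ p x y :=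
  have hx := hp.equiv_neg_of_nonneg_neg_one hv x
  ⟨hp.trans _ _ _ hx.1, hp.trans _ _ _ hx.2⟩

theorem rel_neg_right_iff (hp : IsQuasiOrdering p) (hv : p 0 (-1)) : p x (-y) ↔ p x y :=
  have hy := hp.equiv_neg_of_nonneg_neg_one hv y
  ⟨fun h => hp.trans _ _ _ h hy.2, fun h => hp.trans _ _ _ h hy.1⟩

theorem rel_absOf_iff (hp₁ : IsQuasiOrdering p₁) (hv : p₁ 0 (-1)) :
    p₁ (absOf p x) (absOf p y) ↔ p₁ x y := by
  rcases absOf_eq_or p x with ex | ex <;> rcases absOf_eq_or p y with ey | ey <;>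
    simp only [ex, ey, hp₁.rel_neg_left_iff hv, hp₁.rel_neg_right_iff hv]

theorem notMem_supp_of_rel_of_not_rel (hp : IsQuasiOrdering p) (hp₁ : IsQuasiOrdering p₁)
    (hs : supp p₁ = supp p) (hc : Coarser p p₁) (hx : p 0 x) (hxy : p₁ x y) (hyx : ¬ p x y) :
    y ∉ supp p := by
  intro hy
  have hx₁ : x ∈ supp p₁ := ⟨hp₁.trans _ _ _ hxy (hs ▸ hy).1, hc 0 x (hp.refl 0) hx⟩
  exact hyx (hp.trans _ _ _ (hs ▸ hx₁).1 hy.2)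

theorem false_of_crossed (hp : IsQuasiOrdering p) (hp₁ : IsQuasiOrdering p₁)
    (hp₂ : IsQuasiOrdering p₂) (hs₁ : supp p₁ = supp p) (hs₂ : supp p₂ = supp p)
    (hc₁ : Coarser p p₁) (hc₂ : Coarser p p₂) (hx : p 0 x) (hy : p 0 y) (hu : p 0 u)
    (hv : p 0 v) (hxy : p₁ x y) (hxy' : ¬ p₂ x y) (huv : p₂ u v) (huv' : ¬ p₁ u v) : False := by
  have hyx : ¬ p x y := fun h => hxy' (hc₂ x y hx h)
  have hvu : ¬ p u v := fun h => huv' (hc₁ u v hu h)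
  have hys := hp.notMem_supp_of_rel_of_not_rel hp₁ hs₁ hc₁ hx hxy hyx
  have hvs := hp.notMem_supp_of_rel_of_not_rel hp₂ hs₂ hc₂ hu huv hvu
  rcases hp.total (y * u) (x * v) with h | h
  · have h₁ : p₁ (y * u) (y * v) := hp₁.trans _ _ _ (hc₁ _ _ (hp.nonneg_mul hy hu) h)
      (hp₁.mul_right_mono (hc₁ 0 v (hp.refl 0) hv) hxy)
    refine huv' (hp₁.rel_of_mul_left (hc₁ 0 y (hp.refl 0) hy) (fun h' => hys ?_) h₁)
    exact hs₁ ▸ ⟨h', hc₁ 0 y (hp.refl 0) hy⟩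
  · have h₂ : p₂ (x * v) (y * v) := hp₂.trans _ _ _ (hc₂ _ _ (hp.nonneg_mul hx hv) h)
      (hp₂.mul_left_mono (hc₂ 0 y (hp.refl 0) hy) huv)
    refine hxy' (hp₂.rel_of_mul_right (hc₂ 0 v (hp.refl 0) hv) (fun h' => hvs ?_) h₂)
    exact hs₂ ▸ ⟨h', hc₂ 0 v (hp.refl 0) hv⟩

theorem coarser_or_coarser_of_supp_eq (hp : IsQuasiOrdering p) (hp₁ : IsQuasiOrdering p₁)
    (hp₂ : IsQuasiOrdering p₂) (hs₁ : supp p₁ = supp p) (hs₂ : supp p₂ = supp p)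
    (hc₁ : Coarser p p₁) (hc₂ : Coarser p p₂) : Coarser p₁ p₂ ∨ Coarser p₂ p₁ := by
  by_cases hv₁ : p₁ 0 (-1)
  · by_cases hv₂ : p₂ 0 (-1)
    · by_contra h
      simp only [Coarser, not_or, not_forall] at h
      obtain ⟨⟨x, y, -, hxy, hxy'⟩, u, v, -, huv, huv'⟩ := h
      exact hp.false_of_crossed hp₁ hp₂ hs₁ hs₂ hc₁ hc₂ (hp.nonneg_absOf x) (hp.nonneg_absOf y)
        (hp.nonneg_absOf u) (hp.nonneg_absOf v) ((hp₁.rel_absOf_iff hv₁).2 hxy)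
        (mt (hp₂.rel_absOf_iff hv₂).1 hxy') ((hp₂.rel_absOf_iff hv₂).2 huv)
        (mt (hp₁.rel_absOf_iff hv₁).1 huv')
    · exact Or.inr fun a b ha hab => hc₁ a b
        (hp.rel_of_coarser_of_not_nonneg_neg_one hp₂ hc₂ hv₂ hs₂ ha)
        (hp.rel_of_coarser_of_not_nonneg_neg_one hp₂ hc₂ hv₂ hs₂ hab)
  · exact Or.inl fun a b ha hab => hc₂ a b
      (hp.rel_of_coarser_of_not_nonneg_neg_one hp₁ hc₁ hv₁ hs₁ ha)
      (hp.rel_of_coarser_of_not_nonneg_neg_one hp₁ hc₁ hv₁ hs₁ hab)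

end IsQuasiOrdering

/-- Proposition 4.11: the set of all quasi-orderings on R, partially ordered by
the coarser relation, is a tree (has a maximum, and the coarsenings of any
element are linearly ordered) if and only if R has precisely one (completely)
prime ideal. -/
theorem all_quasiOrderings_tree_iff_unique_prime :
    ((∃ m : R → R → Prop, IsQuasiOrdering m ∧
        ∀ p : R → R → Prop, IsQuasiOrdering p → Coarser p m) ∧
      (∀ p p₁ p₂ : R → R → Prop, IsQuasiOrdering p → IsQuasiOrdering p₁ →
        IsQuasiOrdering p₂ → Coarser p p₁ → Coarser p p₂ →
        Coarser p₁ p₂ ∨ Coarser p₂ p₁)) ↔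
    (∃! q : Set R, IsCompletelyPrimeIdeal q) := by
  constructor
  · rintro ⟨⟨m, hm, hmax⟩, -⟩
    exact ⟨supp m, hm.supp_isCompletelyPrimeIdeal, fun q hq =>
      (hm.supp_eq_of_coarser_trivialOf hq (hmax _ hq.isQuasiOrdering_trivialOf)).symm⟩
  · rintro ⟨q, hq, huniq⟩
    have hsupp : ∀ p, IsQuasiOrdering p → supp p = q := fun p hp =>
      huniq _ hp.supp_isCompletelyPrimeIdeal
    refine ⟨⟨trivialOf q, hq.isQuasiOrdering_trivialOf, fun p hp =>
      hsupp p hp ▸ hp.coarser_trivialOf_supp⟩, fun p p₁ p₂ hp hp₁ hp₂ => ?_⟩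
    exact hp.coarser_or_coarser_of_supp_eq hp₁ hp₂ ((hsupp _ hp₁).trans (hsupp _ hp).symm)
      ((hsupp _ hp₂).trans (hsupp _ hp).symm)
end
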